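/- Let r > 0, X be a complete Hausdorff locally convex space and (T(t))_{t≥0} a strongly continuous quasi-equicontinuous semigroup on X with generator (A, D(A)) such that 0 ∈ ρ(A). Let U be a Hausdorff locally convex space and B ∈ L(U; X_{−1}). Then the following are equivalent: (a) (T∗A_{−1}^{−1}Bf)(t) ∈ D(A) for all f ∈ C([0,r];U) and t ∈ [0,r]; (b) B is C-admissible for r. If these hold, then (T_{−1}∗Bf)(t) = A(T∗A_{−1}^{−1}Bf)(t) for all f ∈ C([0,r];U) and t ∈ [0,r]. -/

import Mathlib

open Filter Topology Set Classical
open scoped ENNReal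

/-- A partition `a = d₀ < d₁ < ⋯ < dₙ = b` of the interval `[a,b]`. -/
structure IntervalPartition (a b : ℝ) where
  n : ℕ
  points : ℕ → ℝ
  first_eq : points 0 = a
  last_eq : points n = b
  increasing : ∀ i, i < n → points i < points (i + 1)

section Defs

variable {X Y U : Type*}
variable [AddCommGroup X] [Module ℝ X] [UniformSpace X] [IsUniformAddGroup X] [ContinuousSMul ℝ X]
variable [AddCommGroup Y] [Module ℝ Y] [UniformSpace Y] [IsUniformAddGroup Y] [ContinuousSMul ℝ Y]
variable [AddCommGroup U] [Module ℝ U] [UniformSpace U] [IsUniformAddGroup U] [ContinuousSMul ℝ U]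

/-- The semivariation `SV_{q,p}(α)` of `α : [a,b] → L(X;Y)` (value in `ℝ≥0∞`). -/
noncomputable def SV (α : ℝ → X →L[ℝ] Y) (q : Seminorm ℝ Y) (p : Seminorm ℝ X)
    (a b : ℝ) : ℝ≥0∞ :=
  ⨆ (d : IntervalPartition a b) (x : ℕ → X) (_ : ∀ i, i < d.n → p (x i) ≤ 1),
    ENNReal.ofReal
      (q (∑ i ∈ Finset.range d.n,
        (α (d.points (i + 1)) (x i) - α (d.points i) (x i))))

/-- `α : [a,b] → L(X;Y)` is of bounded semivariation. -/
def BoundedSemivariation (α : ℝ → X →L[ℝ] Y) (a b : ℝ) : Prop :=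
  ∀ q : Seminorm ℝ Y, Continuous ⇑q →
    ∃ p : Seminorm ℝ X, Continuous ⇑p ∧ SV α q p a b < ⊤

/-- `y` is the Riemann–Stieltjes integral `∫_a^b f dα`. -/
def IsRSIntegral (α : ℝ → X →L[ℝ] Y) (f : ℝ → X) (a b : ℝ) (y : Y) : Prop :=
  ∀ q : Seminorm ℝ Y, Continuous ⇑q → ∀ ε : ℝ, 0 < ε → ∃ δ : ℝ, 0 < δ ∧
    ∀ (d : IntervalPartition a b) (c : ℕ → ℝ),
      (∀ i, i < d.n → d.points (i + 1) - d.points i < δ) →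
      (∀ i, i < d.n → c i ∈ Set.Icc (d.points i) (d.points (i + 1))) →
      q ((∑ i ∈ Finset.range d.n,
        (α (d.points (i + 1)) (f (c i)) - α (d.points i) (f (c i)))) - y) < ε

/-- The Riemann–Stieltjes integral `∫_a^b f dα` (junk value `0` if it does not exist). -/
noncomputable def RSIntegral (α : ℝ → X →L[ℝ] Y) (f : ℝ → X) (a b : ℝ) : Y :=
  if h : ∃ y, IsRSIntegral α f a b y then h.choose else 0

/-- `y` is the Riemann integral `∫_a^b f(s) ds`. -/
def IsRiemannIntegral (f : ℝ → X) (a b : ℝ) (y : X) : Prop :=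
  ∀ q : Seminorm ℝ X, Continuous ⇑q → ∀ ε : ℝ, 0 < ε → ∃ δ : ℝ, 0 < δ ∧
    ∀ (d : IntervalPartition a b) (c : ℕ → ℝ),
      (∀ i, i < d.n → d.points (i + 1) - d.points i < δ) →
      (∀ i, i < d.n → c i ∈ Set.Icc (d.points i) (d.points (i + 1))) →
      q ((∑ i ∈ Finset.range d.n, (d.points (i + 1) - d.points i) • f (c i)) - y) < ε

/-- The Riemann integral `∫_a^b f(s) ds` (junk value `0` if it does not exist). -/
noncomputable def riemannIntegral (f : ℝ → X) (a b : ℝ) : X :=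
  if h : ∃ y, IsRiemannIntegral f a b y then h.choose else 0

/-- Sequential completeness: every Cauchy sequence converges. -/
def SequentiallyComplete (Z : Type*) [UniformSpace Z] : Prop :=
  ∀ u : ℕ → Z, CauchySeq u → ∃ z, Filter.Tendsto u Filter.atTop (𝓝 z)

/-- A strongly continuous, locally equicontinuous semigroup. -/
def IsSCLESemigroup (T : ℝ → X →L[ℝ] X) : Prop :=
  T 0 = ContinuousLinearMap.id ℝ X ∧
  (∀ s t : ℝ, 0 ≤ s → 0 ≤ t → T (s + t) = (T s).comp (T t)) ∧
  (∀ x : X, ContinuousOn (fun t => T t x) (Set.Ici (0:ℝ))) ∧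
  (∀ q : Seminorm ℝ X, Continuous ⇑q → ∀ t₀ : ℝ, 0 ≤ t₀ →
    ∃ p : Seminorm ℝ X, Continuous ⇑p ∧ ∃ C : ℝ, 0 ≤ C ∧
      ∀ t ∈ Set.Icc (0:ℝ) t₀, ∀ x : X, q (T t x) ≤ C * p x)

/-- A strongly continuous, quasi-equicontinuous semigroup. -/
def IsSCQESemigroup (T : ℝ → X →L[ℝ] X) : Prop :=
  T 0 = ContinuousLinearMap.id ℝ X ∧
  (∀ s t : ℝ, 0 ≤ s → 0 ≤ t → T (s + t) = (T s).comp (T t)) ∧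
  (∀ x : X, ContinuousOn (fun t => T t x) (Set.Ici (0:ℝ))) ∧
  (∃ ω : ℝ, ∀ q : Seminorm ℝ X, Continuous ⇑q →
    ∃ p : Seminorm ℝ X, Continuous ⇑p ∧ ∃ C : ℝ, 0 ≤ C ∧
      ∀ t : ℝ, 0 ≤ t → ∀ x : X, q (Real.exp (-ω * t) • T t x) ≤ C * p x)

/-- The domain of the generator of a semigroup. -/
def genDomain (T : ℝ → X →L[ℝ] X) : Set X :=
  {x | ∃ y : X, Filter.Tendsto (fun t : ℝ => t⁻¹ • (T t x - x)) (𝓝[>] (0:ℝ)) (𝓝 y)}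

/-- The generator of a semigroup (junk value `0` outside of its domain). -/
noncomputable def generator (T : ℝ → X →L[ℝ] X) (x : X) : X :=
  if h : ∃ y : X, Filter.Tendsto (fun t : ℝ => t⁻¹ • (T t x - x)) (𝓝[>] (0:ℝ)) (𝓝 y)
  then h.choose else 0

/-- The convolution `(T∗f)(t) = ∫_0^t T(t-s) f(s) ds`. -/
noncomputable def sgConv (T : ℝ → X →L[ℝ] X) (f : ℝ → X) (t : ℝ) : X :=
  riemannIntegral (fun s => T (t - s) (f s)) 0 t

/-- `v` is the derivative of `u` at `t` within the set `s` (limit of difference quotients). -/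
def HasDerivWithinSetLC (u : ℝ → X) (v : X) (s : Set ℝ) (t : ℝ) : Prop :=
  Filter.Tendsto (fun h : ℝ => h⁻¹ • (u (t + h) - u t))
    (𝓝[{h : ℝ | h ≠ 0 ∧ t + h ∈ s}] (0:ℝ)) (𝓝 v)

/-- `u` is continuously differentiable on `s` with derivative `u'`. -/
def IsC1On (u u' : ℝ → X) (s : Set ℝ) : Prop :=
  ContinuousOn u s ∧ ContinuousOn u' s ∧ ∀ t ∈ s, HasDerivWithinSetLC u (u' t) s t

/-- `u` is a strict solution of `u' = Au + g` on `[0,r]`, `u(0) = x`. -/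
def IsStrictSolution (T : ℝ → X →L[ℝ] X) (g : ℝ → X) (x : X) (r : ℝ) (u : ℝ → X) : Prop :=
  u 0 = x ∧ (∀ t ∈ Set.Icc (0:ℝ) r, u t ∈ genDomain T) ∧
  ∃ u' : ℝ → X, IsC1On u u' (Set.Icc (0:ℝ) r) ∧
    ∀ t ∈ Set.Icc (0:ℝ) r, u' t = generator T (u t) + g t

/-- `(T(t))` satisfies C-maximal regularity for `(B,r)`. -/
def CMaxReg (T : ℝ → X →L[ℝ] X) (B : U →L[ℝ] X) (r : ℝ) : Prop :=
  ∀ f : ℝ → U, ContinuousOn f (Set.Icc (0:ℝ) r) →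
    (∀ t ∈ Set.Icc (0:ℝ) r, sgConv T (fun s => B (f s)) t ∈ genDomain T) ∧
    ContinuousOn (fun t => generator T (sgConv T (fun s => B (f s)) t)) (Set.Icc (0:ℝ) r)

end Defs

/-!
Write `Φ_t g = ∫_0^t T₋₁(t - s) g(s) ds`. Conjugation by `A₋₁` gives
`Φ_t (B f) = A₋₁ (T ∗ A₋₁⁻¹ B f)(t)`, and `A₋₁ x ∈ X` iff `x ∈ D(A)` because `A` is onto; this gives
(a) ⇒ (b) and the formula. For (b) ⇒ (a), `Φ_t (B f) ∈ X` is needed for every `t ≤ r`: extending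
`f` to `[0, r]` by the constant `f 0` on `[0, r - t]` writes `Φ_t (B f)` as `Φ_r` of a continuous
input minus `T₋₁(t) Φ_{r-t} (B (f 0))`, and `Φ_s z = ∫_0^s T₋₁(σ) z dσ` lies in `D(A₋₁) = X`.

Riemann integrals in a locally convex space are treated as limits of Riemann sums along the
filter of ever finer tagged partitions; completeness gives their existence for continuous integrands
through a Cauchy argument on common refinements.
-/

namespace IntervalPartition

variable {a b c : ℝ}

theorem points_mono (d : IntervalPartition a b) {i j : ℕ} (hij : i ≤ j) (hj : j ≤ d.n) :
    d.points i ≤ d.points j := by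
  induction j, hij using Nat.le_induction with
  | base => exact le_rfl
  | succ k _ ih => exact (ih (by omega)).trans (d.increasing k (by omega)).le

theorem left_le_points (d : IntervalPartition a b) {i : ℕ} (hi : i ≤ d.n) : a ≤ d.points i :=
  d.first_eq.symm.trans_le (d.points_mono (Nat.zero_le i) hi)

theorem points_le_right (d : IntervalPartition a b) {i : ℕ} (hi : i ≤ d.n) : d.points i ≤ b :=
  (d.points_mono hi le_rfl).trans_eq d.last_eq

theorem sum_sub_points (d : IntervalPartition a b) :
    ∑ i ∈ Finset.range d.n, (d.points (i + 1) - d.points i) = b - a := by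
  rw [Finset.sum_range_sub d.points, d.last_eq, d.first_eq]

def IsTagging (d : IntervalPartition a b) (τ : ℕ → ℝ) : Prop :=
  ∀ i < d.n, τ i ∈ Icc (d.points i) (d.points (i + 1))

def MeshLT (d : IntervalPartition a b) (δ : ℝ) : Prop :=
  ∀ i < d.n, d.points (i + 1) - d.points i < δ

theorem IsTagging.mem_Icc {d : IntervalPartition a b} {τ : ℕ → ℝ} (hτ : d.IsTagging τ) {i : ℕ}
    (hi : i < d.n) : τ i ∈ Icc a b :=
  ⟨(d.left_le_points hi.le).trans (hτ i hi).1, (hτ i hi).2.trans (d.points_le_right hi)⟩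

noncomputable def uniform (hab : a < b) (n : ℕ) : IntervalPartition a b where
  n := n + 1
  points i := a + i * ((b - a) / (n + 1))
  first_eq := by simp
  last_eq := by field_simp; push_cast; ring
  increasing i _ := by
    have : 0 < (b - a) / (n + 1) := div_pos (by linarith) (by positivity)
    push_cast
    nlinarith

def shift {k : ℝ} (d : IntervalPartition (a + k) (b + k)) : IntervalPartition a b where
  n := d.n
  points i := d.points i - k
  first_eq := by rw [d.first_eq, add_sub_cancel_right]
  last_eq := by rw [d.last_eq, add_sub_cancel_right]
  increasing i hi := sub_lt_sub_right (d.increasing i hi) k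

def concat (d₁ : IntervalPartition a c) (d₂ : IntervalPartition c b) : IntervalPartition a b where
  n := d₁.n + d₂.n
  points i := if i ≤ d₁.n then d₁.points i else d₂.points (i - d₁.n)
  first_eq := by simp [d₁.first_eq]
  last_eq := by
    split_ifs with h
    · have h₂ : d₂.n = 0 := by omega
      rw [h₂, add_zero, d₁.last_eq, ← d₂.first_eq, ← h₂, d₂.last_eq]
    · rw [Nat.add_sub_cancel_left, d₂.last_eq]
  increasing i hi := by
    by_cases h : i + 1 ≤ d₁.n
    · rw [if_pos h, if_pos (by omega)]
      exact d₁.increasing i h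
    · rw [if_neg h, show i + 1 - d₁.n = i - d₁.n + 1 by omega]
      split_ifs with h'
      · obtain rfl : i = d₁.n := by omega
        rw [d₁.last_eq, Nat.sub_self]
        exact d₂.first_eq.symm.trans_lt (d₂.increasing 0 (by omega))
      · exact d₂.increasing _ (by omega)

theorem concat_points_of_le (d₁ : IntervalPartition a c) (d₂ : IntervalPartition c b) {i : ℕ}
    (hi : i ≤ d₁.n) : (d₁.concat d₂).points i = d₁.points i :=
  if_pos hi

theorem concat_points_add (d₁ : IntervalPartition a c) (d₂ : IntervalPartition c b) (i : ℕ) :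
    (d₁.concat d₂).points (d₁.n + i) = d₂.points i := by
  show (if d₁.n + i ≤ d₁.n then _ else _) = _
  split_ifs with h
  · rw [show i = 0 by omega, add_zero, d₁.last_eq, d₂.first_eq]
  · rw [Nat.add_sub_cancel_left]

end IntervalPartition

/-- The length of `[u, v] ∩ [u', v']`. -/
def overlap (u v u' v' : ℝ) : ℝ := max 0 (min v v' - max u u')

theorem overlap_comm (u v u' v' : ℝ) : overlap u v u' v' = overlap u' v' u v := by
  unfold overlap
  rw [min_comm v, max_comm u]

theorem overlap_eq_clamp_sub_clamp {u v w w' : ℝ} (huv : u ≤ v) (hw : w ≤ w') :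
    overlap u v w w' = max u (min v w') - max u (min v w) := by
  rw [overlap]
  rcases le_total w' u with h | h <;> rcases le_total v w with h' | h' <;>
    simp only [min_def, max_def] <;> split_ifs <;> linarith

theorem IntervalPartition.sum_overlap {a b u v : ℝ} (e : IntervalPartition a b) (hu : a ≤ u)
    (huv : u ≤ v) (hv : v ≤ b) :
    ∑ j ∈ Finset.range e.n, overlap u v (e.points j) (e.points (j + 1)) = v - u := by
  rw [Finset.sum_congr rfl fun j hj => overlap_eq_clamp_sub_clamp huv
      (e.increasing j (Finset.mem_range.1 hj)).le,
    Finset.sum_range_sub (fun j => max u (min v (e.points j))), e.last_eq, e.first_eq,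
    min_eq_left hv, max_eq_right huv, min_eq_right (hu.trans huv), max_eq_left hu]

theorem abs_sub_lt_of_overlap_pos {u v u' v' s s' δ : ℝ} (h : 0 < overlap u v u' v')
    (hs : s ∈ Icc u v) (hs' : s' ∈ Icc u' v') (hδ : v - u < δ / 2) (hδ' : v' - u' < δ / 2) :
    |s - s'| < δ := by
  have h' : max u u' < min v v' := by
    by_contra! hle
    exact h.ne' (max_eq_left (by linarith))
  rw [max_lt_iff, lt_min_iff, lt_min_iff] at h'
  rw [abs_lt]
  constructor <;> linarith [hs.1, hs.2, hs'.1, hs'.2]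

open IntervalPartition

/-- A point `(d, τ)` is a partition `d` with tags `τ i` (only `i < d.n` matter); being eventually
in this filter means being tagged with mesh below some `δ > 0`. -/
def fineFilter (a b : ℝ) : Filter (IntervalPartition a b × (ℕ → ℝ)) :=
  ⨅ δ > 0, 𝓟 {p | p.1.IsTagging p.2 ∧ p.1.MeshLT δ}

theorem hasBasis_fineFilter (a b : ℝ) :
    (fineFilter a b).HasBasis (fun δ : ℝ => 0 < δ)
      fun δ => {p | p.1.IsTagging p.2 ∧ p.1.MeshLT δ} :=
  hasBasis_biInf_principal'
    (fun δ hδ δ' hδ' => ⟨min δ δ', lt_min hδ hδ',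
      fun _ hp => ⟨hp.1, fun i hi => (hp.2 i hi).trans_le (min_le_left _ _)⟩,
      fun _ hp => ⟨hp.1, fun i hi => (hp.2 i hi).trans_le (min_le_right _ _)⟩⟩)
    ⟨1, one_pos⟩

theorem fineFilter_neBot {a b : ℝ} (hab : a ≤ b) : (fineFilter a b).NeBot := by
  refine (hasBasis_fineFilter a b).neBot_iff.2 fun {δ} hδ => ?_
  rcases hab.eq_or_lt with rfl | hlt
  · exact ⟨(⟨0, fun _ => a, rfl, rfl, fun i hi => absurd hi (Nat.not_lt_zero i)⟩, fun _ => a),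
      fun i hi => absurd hi (Nat.not_lt_zero i), fun i hi => absurd hi (Nat.not_lt_zero i)⟩
  obtain ⟨n, hn⟩ := exists_nat_gt ((b - a) / δ)
  refine ⟨(uniform hlt n, (uniform hlt n).points), fun i hi =>
    ⟨le_rfl, ((uniform hlt n).increasing i hi).le⟩, fun i _ => ?_⟩
  have : (b - a) / (n + 1) < δ := by
    rw [div_lt_iff₀ (by positivity)]
    rw [div_lt_iff₀ hδ] at hn
    nlinarith
  simp only [uniform]
  push_cast
  linarith [show (i + 1 : ℝ) * ((b - a) / (n + 1)) = i * ((b - a) / (n + 1)) + (b - a) / (n + 1)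
    by ring]

theorem tendsto_shift_fineFilter (a b k : ℝ) :
    Tendsto (fun p : IntervalPartition (a + k) (b + k) × (ℕ → ℝ) => (p.1.shift, fun i => p.2 i - k))
      (fineFilter (a + k) (b + k)) (fineFilter a b) :=
  (hasBasis_fineFilter _ _).tendsto_iff (hasBasis_fineFilter a b) |>.2 fun δ hδ =>
    ⟨δ, hδ, fun _ hp =>
      ⟨fun i hi => ⟨sub_le_sub_right (hp.1 i hi).1 k, sub_le_sub_right (hp.1 i hi).2 k⟩,
      fun i hi => (sub_sub_sub_cancel_right _ _ k).trans_lt (hp.2 i hi)⟩⟩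

def taggedConcat {a b c : ℝ} (p : IntervalPartition a c × (ℕ → ℝ))
    (p' : IntervalPartition c b × (ℕ → ℝ)) : IntervalPartition a b × (ℕ → ℝ) :=
  (p.1.concat p'.1, fun i => if i < p.1.n then p.2 i else p'.2 (i - p.1.n))

theorem tendsto_taggedConcat_fineFilter (a b c : ℝ) :
    Tendsto (fun pp : (IntervalPartition a c × (ℕ → ℝ)) × (IntervalPartition c b × (ℕ → ℝ)) =>
      taggedConcat pp.1 pp.2) (fineFilter a c ×ˢ fineFilter c b) (fineFilter a b) := by
  refine ((hasBasis_fineFilter a c).prod (hasBasis_fineFilter c b)).tendsto_iff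
    (hasBasis_fineFilter a b) |>.2 fun δ hδ => ⟨(δ, δ), ⟨hδ, hδ⟩, ?_⟩
  rintro ⟨⟨d₁, τ₁⟩, ⟨d₂, τ₂⟩⟩ ⟨⟨ht₁, hm₁⟩, ⟨ht₂, hm₂⟩⟩
  dsimp only at ht₁ hm₁ ht₂ hm₂
  suffices ∀ i < d₁.n + d₂.n, (if i < d₁.n then τ₁ i else τ₂ (i - d₁.n)) ∈
      Icc ((d₁.concat d₂).points i) ((d₁.concat d₂).points (i + 1)) ∧
      (d₁.concat d₂).points (i + 1) - (d₁.concat d₂).points i < δ from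
    ⟨fun i hi => (this i hi).1, fun i hi => (this i hi).2⟩
  intro i hi
  rcases lt_or_ge i d₁.n with h | h
  · rw [if_pos h, concat_points_of_le _ _ h.le, concat_points_of_le _ _ h]
    exact ⟨ht₁ i h, hm₁ i h⟩
  · obtain ⟨j, rfl⟩ := Nat.exists_eq_add_of_le h
    rw [if_neg (by omega), Nat.add_sub_cancel_left, add_assoc, concat_points_add, concat_points_add]
    exact ⟨ht₂ j (by omega), hm₂ j (by omega)⟩

section RiemannSum

variable {X : Type*} [AddCommGroup X] [Module ℝ X] {a b c : ℝ} {g g' : ℝ → X}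

def riemannSum (g : ℝ → X) (p : IntervalPartition a b × (ℕ → ℝ)) : X :=
  ∑ i ∈ Finset.range p.1.n, (p.1.points (i + 1) - p.1.points i) • g (p.2 i)

theorem riemannSum_congr {p : IntervalPartition a b × (ℕ → ℝ)} (hp : p.1.IsTagging p.2)
    (hgg' : EqOn g g' (Icc a b)) : riemannSum g p = riemannSum g' p :=
  Finset.sum_congr rfl fun i hi => by rw [hgg' (hp.mem_Icc (Finset.mem_range.1 hi))]

theorem riemannSum_taggedConcat (p : IntervalPartition a c × (ℕ → ℝ))
    (p' : IntervalPartition c b × (ℕ → ℝ)) :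
    riemannSum g (taggedConcat p p') = riemannSum g p + riemannSum g p' := by
  simp only [riemannSum, taggedConcat]
  rw [show (p.1.concat p'.1).n = p.1.n + p'.1.n from rfl, Finset.sum_range_add]
  congr 1
  · refine Finset.sum_congr rfl fun i hi => ?_
    have hi : i < p.1.n := Finset.mem_range.1 hi
    rw [concat_points_of_le _ _ hi, concat_points_of_le _ _ hi.le, if_pos hi]
  · refine Finset.sum_congr rfl fun i _ => ?_
    rw [add_assoc, concat_points_add, concat_points_add, if_neg (by omega),
      Nat.add_sub_cancel_left]

theorem riemannSum_eq_sum_overlap (g : ℝ → X) (p : IntervalPartition a b × (ℕ → ℝ))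
    (e : IntervalPartition a b) :
    riemannSum g p = ∑ i ∈ Finset.range p.1.n, ∑ j ∈ Finset.range e.n,
      overlap (p.1.points i) (p.1.points (i + 1)) (e.points j) (e.points (j + 1)) • g (p.2 i) := by
  refine Finset.sum_congr rfl fun i hi => ?_
  have hi := Finset.mem_range.1 hi
  rw [← Finset.sum_smul, e.sum_overlap (p.1.left_le_points hi.le) (p.1.increasing i hi).le
    (p.1.points_le_right hi)]

theorem seminorm_riemannSum_sub_le (q : Seminorm ℝ X) {g : ℝ → X} {δ η : ℝ}
    (hosc : ∀ s ∈ Icc a b, ∀ s' ∈ Icc a b, |s - s'| < δ → q (g s - g s') ≤ η)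
    {d e : IntervalPartition a b} {τ κ : ℕ → ℝ} (hτ : d.IsTagging τ) (hd : d.MeshLT (δ / 2))
    (hκ : e.IsTagging κ) (he : e.MeshLT (δ / 2)) :
    q (riemannSum g (d, τ) - riemannSum g (e, κ)) ≤ (b - a) * η := by
  set L := fun i j => overlap (d.points i) (d.points (i + 1)) (e.points j) (e.points (j + 1))
  have hL : ∀ i < d.n, ∀ j < e.n, q (L i j • (g (τ i) - g (κ j))) ≤ L i j * η := by
    intro i hi j hj
    have hL0 : 0 ≤ L i j := le_max_left _ _
    rw [map_smul_eq_mul, Real.norm_of_nonneg hL0]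
    rcases hL0.eq_or_lt with h | h
    · rw [← h, zero_mul, zero_mul]
    · exact mul_le_mul_of_nonneg_left (hosc _ (hτ.mem_Icc hi) _ (hκ.mem_Icc hj)
        (abs_sub_lt_of_overlap_pos h (hτ i hi) (hκ j hj) (hd i hi) (he j hj))) hL0
  have hsum : riemannSum g (d, τ) - riemannSum g (e, κ) =
      ∑ i ∈ Finset.range d.n, ∑ j ∈ Finset.range e.n, L i j • (g (τ i) - g (κ j)) := by
    rw [riemannSum_eq_sum_overlap g (d, τ) e, riemannSum_eq_sum_overlap g (e, κ) d,
      Finset.sum_comm (s := Finset.range e.n)]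
    simp only [L, overlap_comm (e.points _), smul_sub, Finset.sum_sub_distrib]
  calc q (riemannSum g (d, τ) - riemannSum g (e, κ))
      ≤ ∑ i ∈ Finset.range d.n, ∑ j ∈ Finset.range e.n, L i j * η := by
        rw [hsum]
        refine (Finset.le_sum_of_subadditive q (map_zero q).le (map_add_le_add q) _ _).trans
          (Finset.sum_le_sum fun i hi => ?_)
        refine (Finset.le_sum_of_subadditive q (map_zero q).le (map_add_le_add q) _ _).trans
          (Finset.sum_le_sum fun j hj => hL i (Finset.mem_range.1 hi) j (Finset.mem_range.1 hj))
    _ = (b - a) * η := by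
        simp only [← Finset.sum_mul, L]
        rw [Finset.sum_congr rfl fun i hi => e.sum_overlap
          (d.left_le_points (Finset.mem_range.1 hi).le) (d.increasing i (Finset.mem_range.1 hi)).le
          (d.points_le_right (Finset.mem_range.1 hi)), d.sum_sub_points]

end RiemannSum

section RiemannIntegral

variable {X Y : Type*} [AddCommGroup X] [Module ℝ X] [UniformSpace X]
  [AddCommGroup Y] [Module ℝ Y] [UniformSpace Y] {a b : ℝ} {g g' : ℝ → X} {y : X}

theorem isRiemannIntegral_iff_eventually :
    IsRiemannIntegral g a b y ↔ ∀ q : Seminorm ℝ X, Continuous ⇑q → ∀ ε : ℝ, 0 < ε →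
      ∀ᶠ p in fineFilter a b, q (riemannSum g p - y) < ε := by
  simp only [(hasBasis_fineFilter a b).eventually_iff]
  exact forall₂_congr fun q _ => forall₂_congr fun ε _ => exists_congr fun δ =>
    and_congr_right fun _ =>
      ⟨fun H p hp => H p.1 p.2 hp.2 hp.1, fun H d τ hm ht => @H (d, τ) ⟨ht, hm⟩⟩

theorem isRiemannIntegral_riemannIntegral (h : ∃ y, IsRiemannIntegral g a b y) :
    IsRiemannIntegral g a b (riemannIntegral g a b) := by
  rw [riemannIntegral, dif_pos h]
  exact h.choose_spec

theorem IsRiemannIntegral.congr (h : IsRiemannIntegral g a b y) (hgg' : EqOn g g' (Icc a b)) :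
    IsRiemannIntegral g' a b y := by
  rw [isRiemannIntegral_iff_eventually] at h ⊢
  intro q hq ε hε
  filter_upwards [h q hq ε hε, (hasBasis_fineFilter a b).mem_of_mem one_pos] with p hp htag
  rwa [← riemannSum_congr htag.1 hgg']

theorem riemannIntegral_congr (hgg' : EqOn g g' (Icc a b)) :
    riemannIntegral g a b = riemannIntegral g' a b := by
  have : IsRiemannIntegral g a b = IsRiemannIntegral g' a b :=
    funext fun _ => propext ⟨fun h => h.congr hgg', fun h => h.congr hgg'.symm⟩
  simp only [riemannIntegral, this]

theorem IsRiemannIntegral.map (L : X →L[ℝ] Y) (h : IsRiemannIntegral g a b y) :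
    IsRiemannIntegral (fun s => L (g s)) a b (L y) := by
  rw [isRiemannIntegral_iff_eventually] at h ⊢
  intro q hq ε hε
  filter_upwards [h (q.comp L.toLinearMap) (hq.comp L.continuous) ε hε] with p hp
  simpa [riemannSum, map_sum, map_smul] using hp

theorem IsRiemannIntegral.comp_sub_right (h : IsRiemannIntegral g a b y) (k : ℝ) :
    IsRiemannIntegral (fun s => g (s - k)) (a + k) (b + k) y := by
  rw [isRiemannIntegral_iff_eventually] at h ⊢
  intro q hq ε hε
  refine ((tendsto_shift_fineFilter a b k).eventually (h q hq ε hε)).mono fun p hp => ?_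
  simpa [riemannSum, IntervalPartition.shift] using hp

end RiemannIntegral

open Uniformity in
theorem ContinuousOn.exists_pos_forall_seminorm_sub_lt {X : Type*} [AddCommGroup X]
    [UniformSpace X] [IsUniformAddGroup X] [Module ℝ X] {g : ℝ → X} {a b : ℝ}
    (hg : ContinuousOn g (Icc a b)) {q : Seminorm ℝ X} (hq : Continuous ⇑q) {ε : ℝ} (hε : 0 < ε) :
    ∃ δ > 0, ∀ s ∈ Icc a b, ∀ s' ∈ Icc a b, |s - s'| < δ → q (g s - g s') < ε := by
  have hU : {p : X × X | q (p.1 - p.2) < ε} ∈ 𝓤 X := by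
    rw [uniformity_eq_comap_nhds_zero X]
    refine ⟨{x | q x < ε}, (isOpen_lt hq continuous_const).mem_nhds (by simpa using hε),
      fun p hp => ?_⟩
    change q (p.1 - p.2) < ε
    rw [← neg_sub, map_neg_eq_map]
    exact hp
  obtain ⟨δ, hδ, hsub⟩ := (Metric.uniformity_basis_dist.inf_principal _).mem_iff.1
    (isCompact_Icc.uniformContinuousOn_of_continuous hg hU)
  exact ⟨δ, hδ, fun s hs s' hs' hss' => @hsub (s, s') ⟨by simpa [Real.dist_eq] using hss', hs, hs'⟩⟩

section LocallyConvex

variable {X : Type*} [AddCommGroup X] [Module ℝ X] [UniformSpace X] [IsUniformAddGroup X]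
  [ContinuousSMul ℝ X] [LocallyConvexSpace ℝ X] {a b c : ℝ} {g : ℝ → X} {y : X}

theorem tendsto_nhds_iff_seminorm {ι : Type*} {l : Filter ι} {u : ι → X} {x : X} :
    Tendsto u l (𝓝 x) ↔
      ∀ q : Seminorm ℝ X, Continuous ⇑q → ∀ ε : ℝ, 0 < ε → ∀ᶠ i in l, q (u i - x) < ε := by
  refine ⟨fun h q hq ε hε => ?_, fun h => (with_gaugeSeminormFamily.tendsto_nhds u x).2
    fun s => h _ (with_gaugeSeminormFamily.continuous_seminorm s)⟩
  have := (hq.tendsto 0).comp (tendsto_sub_nhds_zero_iff.2 h)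
  rw [map_zero] at this
  exact this.eventually (gt_mem_nhds hε)

theorem isRiemannIntegral_iff_tendsto :
    IsRiemannIntegral g a b y ↔ Tendsto (riemannSum g) (fineFilter a b) (𝓝 y) := by
  rw [isRiemannIntegral_iff_eventually, tendsto_nhds_iff_seminorm]

theorem IsRiemannIntegral.unique [T2Space X] (hab : a ≤ b) {y' : X}
    (h : IsRiemannIntegral g a b y) (h' : IsRiemannIntegral g a b y') : y = y' :=
  have := fineFilter_neBot hab
  tendsto_nhds_unique (isRiemannIntegral_iff_tendsto.1 h) (isRiemannIntegral_iff_tendsto.1 h')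

theorem riemannIntegral_eq [T2Space X] (hab : a ≤ b)
    (h : IsRiemannIntegral g a b y) : riemannIntegral g a b = y := by
  have hex : ∃ y, IsRiemannIntegral g a b y := ⟨y, h⟩
  rw [riemannIntegral, dif_pos hex]
  exact hex.choose_spec.unique hab h

theorem riemannIntegral_comp_equiv [T2Space X] {W : Type*} [AddCommGroup W] [Module ℝ W]
    [UniformSpace W] (L : W ≃L[ℝ] X) {g : ℝ → W} (hab : a ≤ b) :
    riemannIntegral (fun s => L (g s)) a b = L (riemannIntegral g a b) := by
  by_cases hex : ∃ y, IsRiemannIntegral g a b y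
  · rw [show riemannIntegral g a b = hex.choose from dif_pos hex]
    exact riemannIntegral_eq hab (hex.choose_spec.map (L : W →L[ℝ] X))
  · have hex' : ¬∃ z, IsRiemannIntegral (fun s => L (g s)) a b z := fun ⟨z, hz⟩ =>
      hex ⟨L.symm z, by simpa using hz.map (L.symm : X →L[ℝ] W)⟩
    simp only [riemannIntegral, dif_neg hex, dif_neg hex', map_zero]

theorem IsRiemannIntegral.eq_add_adjacent [T2Space X]
    (hac : a ≤ c) (hcb : c ≤ b) {y₁ y₂ : X} (h : IsRiemannIntegral g a b y)
    (h₁ : IsRiemannIntegral g a c y₁) (h₂ : IsRiemannIntegral g c b y₂) : y = y₁ + y₂ := by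
  rw [isRiemannIntegral_iff_tendsto] at h h₁ h₂
  have := fineFilter_neBot hac
  have := fineFilter_neBot hcb
  refine tendsto_nhds_unique (h.comp (tendsto_taggedConcat_fineFilter a b c)) ?_
  simpa only [Function.comp_def, riemannSum_taggedConcat] using
    (h₁.comp tendsto_fst).add (h₂.comp tendsto_snd)

theorem IsRiemannIntegral.seminorm_sub_smul_le
    (h : IsRiemannIntegral g a b y) (hab : a ≤ b) {q : Seminorm ℝ X} (hq : Continuous ⇑q)
    {v : X} {M : ℝ} (hM : ∀ s ∈ Icc a b, q (g s - v) ≤ M) :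
    q (y - (b - a) • v) ≤ M * (b - a) := by
  have := fineFilter_neBot hab
  refine le_of_tendsto ((hq.tendsto _).comp ((isRiemannIntegral_iff_tendsto.1 h).sub_const _))
    (eventually_of_mem ((hasBasis_fineFilter a b).mem_of_mem one_pos) fun p hp => ?_)
  have hΔ : ∀ i < p.1.n, 0 ≤ p.1.points (i + 1) - p.1.points i :=
    fun i hi => sub_nonneg.2 (p.1.increasing i hi).le
  calc q (riemannSum g p - (b - a) • v)
      = q (∑ i ∈ Finset.range p.1.n, (p.1.points (i + 1) - p.1.points i) • (g (p.2 i) - v)) := by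
        simp only [riemannSum, smul_sub, Finset.sum_sub_distrib, ← Finset.sum_smul,
          p.1.sum_sub_points]
    _ ≤ ∑ i ∈ Finset.range p.1.n, (p.1.points (i + 1) - p.1.points i) * M := by
        refine (Finset.le_sum_of_subadditive q (map_zero q).le (map_add_le_add q) _ _).trans
          (Finset.sum_le_sum fun i hi => ?_)
        have hi := Finset.mem_range.1 hi
        rw [map_smul_eq_mul, Real.norm_of_nonneg (hΔ i hi)]
        exact mul_le_mul_of_nonneg_left (hM _ (hp.1.mem_Icc hi)) (hΔ i hi)
    _ = M * (b - a) := by rw [← Finset.sum_mul, p.1.sum_sub_points, mul_comm]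

theorem exists_isRiemannIntegral [CompleteSpace X] (hab : a ≤ b) (hg : ContinuousOn g (Icc a b)) :
    ∃ y, IsRiemannIntegral g a b y := by
  have := fineFilter_neBot hab
  suffices Cauchy (map (riemannSum g) (fineFilter a b)) by
    obtain ⟨y, hy⟩ := CompleteSpace.complete this
    exact ⟨y, isRiemannIntegral_iff_tendsto.2 hy⟩
  rw [cauchy_map_iff', uniformity_eq_comap_nhds_zero X, tendsto_comap_iff,
    tendsto_nhds_iff_seminorm]
  intro q hq ε hε
  have hη : 0 < ε / (b - a + 1) := div_pos hε (by linarith)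
  obtain ⟨δ, hδ, hosc⟩ := hg.exists_pos_forall_seminorm_sub_lt hq hη
  have hfine := (hasBasis_fineFilter a b).mem_of_mem (half_pos hδ)
  filter_upwards [prod_mem_prod hfine hfine] with ⟨⟨d, τ⟩, ⟨e, κ⟩⟩ ⟨⟨hτ, hd⟩, ⟨hκ, he⟩⟩
  calc q (riemannSum g (e, κ) - riemannSum g (d, τ) - 0)
      ≤ (b - a) * (ε / (b - a + 1)) := by
        rw [sub_zero]
        exact seminorm_riemannSum_sub_le q (fun s hs s' hs' h => (hosc s hs s' hs' h).le)
          hκ he hτ hd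
    _ < ε := by
        rw [mul_div_assoc', div_lt_iff₀ (by linarith)]
        nlinarith

end LocallyConvex

section Semigroup

variable {X : Type*} [AddCommGroup X] [Module ℝ X] [UniformSpace X] {T : ℝ → X →L[ℝ] X}

theorem IsSCQESemigroup.exists_seminorm_bound (hT : IsSCQESemigroup T) {q : Seminorm ℝ X}
    (hq : Continuous ⇑q) (t₀ : ℝ) :
    ∃ p : Seminorm ℝ X, Continuous ⇑p ∧ ∃ M : ℝ, ∀ τ ∈ Icc 0 t₀, ∀ x, q (T τ x) ≤ M * p x := by
  obtain ⟨-, -, -, ω, hω⟩ := hT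
  obtain ⟨p, hp, C, hC, hbound⟩ := hω q hq
  refine ⟨p, hp, C * Real.exp (|ω| * t₀), fun τ hτ x => ?_⟩
  have h₁ := hbound τ hτ.1 x
  rw [map_smul_eq_mul, Real.norm_of_nonneg (Real.exp_pos _).le] at h₁
  have h₂ : Real.exp (ω * τ) ≤ Real.exp (|ω| * t₀) := Real.exp_le_exp.2 <|
    (mul_le_mul_of_nonneg_right (le_abs_self ω) hτ.1).trans
      (mul_le_mul_of_nonneg_left hτ.2 (abs_nonneg ω))
  calc q (T τ x) = Real.exp (ω * τ) * (Real.exp (-ω * τ) * q (T τ x)) := by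
        rw [← mul_assoc, ← Real.exp_add, neg_mul, add_neg_cancel, Real.exp_zero, one_mul]
    _ ≤ Real.exp (|ω| * t₀) * (C * p x) :=
        mul_le_mul h₂ h₁ (by positivity) (Real.exp_pos _).le
    _ = C * Real.exp (|ω| * t₀) * p x := by ring

theorem sgConv_congr {f f' : ℝ → X} {t : ℝ} (hff' : EqOn f f' (Icc 0 t)) :
    sgConv T f t = sgConv T f' t :=
  riemannIntegral_congr fun s hs => congrArg (T (t - s)) (hff' hs)

variable [IsUniformAddGroup X] [ContinuousSMul ℝ X] [LocallyConvexSpace ℝ X]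

theorem IsSCQESemigroup.continuousOn_conv (hT : IsSCQESemigroup T) {f : ℝ → X} {t : ℝ}
    (hf : ContinuousOn f (Icc 0 t)) : ContinuousOn (fun s => T (t - s) (f s)) (Icc 0 t) := by
  intro s₀ hs₀
  have hmaps : MapsTo (fun s => t - s) (Icc 0 t) (Ici 0) := fun s hs => sub_nonneg.2 hs.2
  have h₁ : Tendsto (fun s => T (t - s) (f s - f s₀)) (𝓝[Icc 0 t] s₀) (𝓝 0) := by
    rw [tendsto_nhds_iff_seminorm]
    intro q hq ε hε
    obtain ⟨p, hp, M, hM⟩ := hT.exists_seminorm_bound hq t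
    have hp₀ : Tendsto (fun s => M * p (f s - f s₀)) (𝓝[Icc 0 t] s₀) (𝓝 0) := by
      simpa using ((hp.tendsto 0).comp (tendsto_sub_nhds_zero_iff.2 (hf s₀ hs₀))).const_mul M
    refine (squeeze_zero' (Eventually.of_forall fun s => apply_nonneg q _) ?_ hp₀).eventually
      (gt_mem_nhds hε) |>.mono fun s hs => by rwa [sub_zero]
    filter_upwards [self_mem_nhdsWithin] with s hs
    exact hM (t - s) ⟨sub_nonneg.2 hs.2, by linarith [hs.1]⟩ _
  have h₂ : Tendsto (fun s => T (t - s) (f s₀)) (𝓝[Icc 0 t] s₀) (𝓝 (T (t - s₀) (f s₀))) :=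
    ((hT.2.2.1 (f s₀)).comp (continuous_const.sub continuous_id).continuousOn hmaps) s₀ hs₀
  simpa [ContinuousWithinAt] using h₁.add h₂

variable [CompleteSpace X]

theorem IsSCQESemigroup.isRiemannIntegral_sgConv (hT : IsSCQESemigroup T) {f : ℝ → X} {t : ℝ}
    (ht : 0 ≤ t) (hf : ContinuousOn f (Icc 0 t)) :
    IsRiemannIntegral (fun s => T (t - s) (f s)) 0 t (sgConv T f t) :=
  isRiemannIntegral_riemannIntegral (exists_isRiemannIntegral ht (hT.continuousOn_conv hf))

theorem IsSCQESemigroup.tendsto_inv_smul_sgConv_const (hT : IsSCQESemigroup T) (z : X) :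
    Tendsto (fun h => h⁻¹ • sgConv T (fun _ => z) h) (𝓝[>] 0) (𝓝 z) := by
  rw [tendsto_nhds_iff_seminorm]
  intro q hq ε hε
  have hcont : Tendsto (fun σ => q (T σ z - z)) (𝓝[≥] 0) (𝓝 0) := by
    have := (hT.2.2.1 z 0 self_mem_Ici).sub_const z
    simp only [hT.1, ContinuousLinearMap.id_apply, sub_self] at this
    simpa only [map_zero, Function.comp_def] using (hq.tendsto 0).comp this
  obtain ⟨δ, hδ, hsub⟩ :=
    mem_nhdsGE_iff_exists_Ico_subset.1 (hcont.eventually (gt_mem_nhds (half_pos hε)))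
  filter_upwards [Ioo_mem_nhdsGT hδ] with h hh
  have hbound := (hT.isRiemannIntegral_sgConv hh.1.le continuousOn_const).seminorm_sub_smul_le
    hh.1.le hq (v := z) (M := ε / 2) fun s hs =>
      (hsub ⟨sub_nonneg.2 hs.2, by linarith [hs.1, hh.2]⟩ : q (T (h - s) z - z) < ε / 2).le
  rw [sub_zero] at hbound
  set Φ := sgConv T (fun _ => z) h
  calc q (h⁻¹ • Φ - z) = q (h⁻¹ • (Φ - h • z)) := by
        rw [smul_sub, smul_smul, inv_mul_cancel₀ hh.1.ne', one_smul]
    _ = h⁻¹ * q (Φ - h • z) := by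
        rw [map_smul_eq_mul, Real.norm_of_nonneg (inv_nonneg.2 hh.1.le)]
    _ ≤ h⁻¹ * (ε / 2 * h) := mul_le_mul_of_nonneg_left hbound (inv_nonneg.2 hh.1.le)
    _ < ε := by rw [mul_comm, mul_assoc, mul_inv_cancel₀ hh.1.ne']; linarith

variable [T2Space X]

theorem IsSCQESemigroup.sgConv_add (hT : IsSCQESemigroup T) {f : ℝ → X} {t h : ℝ} (ht : 0 ≤ t)
    (hh : 0 ≤ h) (hf : ContinuousOn f (Icc 0 (t + h))) :
    sgConv T f (t + h) = T t (sgConv T f h) + sgConv T (fun s => f (s + h)) t := by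
  have hfh : ContinuousOn f (Icc 0 h) := hf.mono (Icc_subset_Icc_right (by linarith))
  have hfs : ContinuousOn (fun s => f (s + h)) (Icc 0 t) :=
    hf.comp (continuous_add_const h).continuousOn fun s hs =>
      ⟨by linarith [hs.1], by linarith [hs.2]⟩
  refine (hT.isRiemannIntegral_sgConv (by linarith) hf).eq_add_adjacent hh (by linarith) ?_ ?_
  · refine ((hT.isRiemannIntegral_sgConv hh hfh).map (T t)).congr fun s hs => ?_
    simp only [add_sub_assoc, hT.2.1 t (h - s) ht (sub_nonneg.2 hs.2),
      ContinuousLinearMap.comp_apply]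
  · have := (hT.isRiemannIntegral_sgConv ht hfs).comp_sub_right h
    rw [zero_add] at this
    refine this.congr fun s _ => ?_
    simp only [sub_add_cancel, sub_sub_eq_add_sub]

theorem IsSCQESemigroup.sgConv_const_mem_genDomain (hT : IsSCQESemigroup T) (z : X) {t : ℝ}
    (ht : 0 ≤ t) : sgConv T (fun _ => z) t ∈ genDomain T := by
  have hΦ := hT.tendsto_inv_smul_sgConv_const z
  refine ⟨T t z - z, ((((T t).continuous.tendsto z).comp hΦ).sub hΦ).congr' ?_⟩
  filter_upwards [self_mem_nhdsWithin] with h (hh : 0 < h)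
  have hcomm : T h (sgConv T (fun _ => z) t) - sgConv T (fun _ => z) t =
      T t (sgConv T (fun _ => z) h) - sgConv T (fun _ => z) h := by
    rw [sub_eq_sub_iff_add_eq_add, ← hT.sgConv_add hh.le ht continuousOn_const, add_comm h t,
      hT.sgConv_add ht hh.le continuousOn_const]
  simp only [Function.comp_apply, map_smul, ← smul_sub, hcomm]

end Semigroup

section Extrapolation

variable {X Y : Type*} [AddCommGroup X] [Module ℝ X] [UniformSpace X]

theorem mem_range_iff_mem_genDomain {T : ℝ → X →L[ℝ] X} {E ι : X → Y} (hE : Function.Injective E)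
    (hEι : ∀ x ∈ genDomain T, E x = ι (generator T x))
    (hsurj : ∀ u, ∃ x ∈ genDomain T, generator T x = u) (x : X) :
    E x ∈ range ι ↔ x ∈ genDomain T := by
  refine ⟨fun ⟨u, hu⟩ => ?_, fun hx => ⟨generator T x, (hEι x hx).symm⟩⟩
  obtain ⟨x', hx', rfl⟩ := hsurj u
  exact hE ((hEι x' hx').trans hu) ▸ hx'

variable [AddCommGroup Y] [Module ℝ Y] [UniformSpace Y] [IsUniformAddGroup Y] [ContinuousSMul ℝ Y]
  [LocallyConvexSpace ℝ Y]

theorem sgConv_eq_of_conj [T2Space Y] {T : ℝ → X →L[ℝ] X} {S : ℝ → Y →L[ℝ] Y} (L : X ≃L[ℝ] Y)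
    (hST : ∀ t : ℝ, 0 ≤ t → ∀ y, S t y = L (T t (L.symm y))) (g : ℝ → Y) {t : ℝ} (ht : 0 ≤ t) :
    sgConv S g t = L (sgConv T (fun s => L.symm (g s)) t) := by
  rw [sgConv, riemannIntegral_congr fun s hs => hST (t - s) (sub_nonneg.2 hs.2) (g s)]
  exact riemannIntegral_comp_equiv L ht

theorem IsSCQESemigroup.sgConv_mem_of_forall_sgConv_mem [CompleteSpace Y] [T2Space Y]
    {S : ℝ → Y →L[ℝ] Y} (hS : IsSCQESemigroup S) {D : Submodule ℝ Y} (hD : genDomain S ⊆ D)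
    (hSD : ∀ t : ℝ, 0 ≤ t → ∀ y ∈ D, S t y ∈ D) {U : Type*} [TopologicalSpace U] {B : U → Y}
    (hB : Continuous B) {r : ℝ}
    (hr : ∀ f : ℝ → U, ContinuousOn f (Icc 0 r) → sgConv S (fun s => B (f s)) r ∈ D)
    {f : ℝ → U} (hf : ContinuousOn f (Icc 0 r)) {t : ℝ} (ht : t ∈ Icc 0 r) :
    sgConv S (fun s => B (f s)) t ∈ D := by
  set f' : ℝ → U := fun s => f (max (s - (r - t)) 0)
  have hf' : ContinuousOn f' (Icc 0 r) :=
    hf.comp ((continuous_sub_right _).max continuous_const).continuousOn fun s hs =>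
      ⟨le_max_right _ _, max_le (by linarith [hs.2, ht.2]) (ht.1.trans ht.2)⟩
  have hsplit := hS.sgConv_add (f := fun s => B (f' s)) ht.1 (sub_nonneg.2 ht.2)
    (by rw [add_sub_cancel]; exact hB.comp_continuousOn hf')
  rw [add_sub_cancel, sgConv_congr (t := r - t) (f' := fun _ => B (f 0)) fun s hs => by
      simp only [f', max_eq_right (sub_nonpos.2 hs.2)],
    sgConv_congr (t := t) (f' := fun s => B (f s)) fun s hs => by
      simp only [f', add_sub_cancel_right, max_eq_left hs.1]] at hsplit
  rw [eq_sub_of_add_eq' hsplit.symm]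
  exact D.sub_mem (hr f' hf')
    (hSD t ht.1 _ (hD (hS.sgConv_const_mem_genDomain _ (sub_nonneg.2 ht.2))))

end Extrapolation

theorem stmt18_general {X Xm1 U : Type*} [AddCommGroup X] [Module ℝ X] [UniformSpace X]
    [AddCommGroup Xm1] [Module ℝ Xm1] [UniformSpace Xm1] [IsUniformAddGroup Xm1]
    [ContinuousSMul ℝ Xm1] [LocallyConvexSpace ℝ Xm1] [T2Space Xm1] [CompleteSpace Xm1]
    [AddCommGroup U] [Module ℝ U] [UniformSpace U]
    (r : ℝ) (hr : 0 < r)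
    (T : ℝ → X →L[ℝ] X)
    (Ainv : X →L[ℝ] X)
    (hAinv1 : ∀ x : X, Ainv x ∈ genDomain T)
    (hAinv2 : ∀ x : X, generator T (Ainv x) = x)
    (ι : X →L[ℝ] Xm1)
    (Am1 : X ≃L[ℝ] Xm1)
    (hAm1ext : ∀ x ∈ genDomain T, Am1 x = ι (generator T x))
    (Tm1 : ℝ → Xm1 →L[ℝ] Xm1) (hTm1 : IsSCQESemigroup Tm1)
    (hext : ∀ t : ℝ, 0 ≤ t → ∀ x : X, Tm1 t (ι x) = ι (T t x))
    (hconj : ∀ t : ℝ, 0 ≤ t → ∀ z : Xm1, Tm1 t z = Am1 (T t (Am1.symm z)))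
    (hgen : ∀ z : Xm1, z ∈ genDomain Tm1 ↔ z ∈ Set.range ⇑ι)
    (B : U →L[ℝ] Xm1) :
    ((∀ f : ℝ → U, ContinuousOn f (Set.Icc (0:ℝ) r) →
        ∀ t ∈ Set.Icc (0:ℝ) r,
          sgConv T (fun s => Am1.symm (B (f s))) t ∈ genDomain T) ↔
      (∀ f : ℝ → U, ContinuousOn f (Set.Icc (0:ℝ) r) →
        sgConv Tm1 (fun s => B (f s)) r ∈ Set.range ⇑ι)) ∧
    ((∀ f : ℝ → U, ContinuousOn f (Set.Icc (0:ℝ) r) →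
        ∀ t ∈ Set.Icc (0:ℝ) r,
          sgConv T (fun s => Am1.symm (B (f s))) t ∈ genDomain T) →
      ∀ f : ℝ → U, ContinuousOn f (Set.Icc (0:ℝ) r) →
        ∀ t ∈ Set.Icc (0:ℝ) r,
          sgConv Tm1 (fun s => B (f s)) t =
            ι (generator T (sgConv T (fun s => Am1.symm (B (f s))) t))) := by
  have hK (f : ℝ → U) {t : ℝ} (ht : 0 ≤ t) :
      sgConv Tm1 (fun s => B (f s)) t = Am1 (sgConv T (fun s => Am1.symm (B (f s))) t) :=
    sgConv_eq_of_conj Am1 hconj _ ht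
  have hdom : ∀ x, Am1 x ∈ range ι ↔ x ∈ genDomain T :=
    mem_range_iff_mem_genDomain Am1.injective hAm1ext fun u => ⟨Ainv u, hAinv1 u, hAinv2 u⟩
  refine ⟨⟨fun ha f hf => ?_, fun hb f hf t ht => ?_⟩, fun ha f hf t ht => ?_⟩
  · rw [hK f hr.le, hAm1ext _ (ha f hf r ⟨hr.le, le_rfl⟩)]
    exact mem_range_self _
  · rw [← hdom, ← hK f ht.1]
    refine hTm1.sgConv_mem_of_forall_sgConv_mem (D := LinearMap.range (ι : X →ₗ[ℝ] Xm1))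
      (fun z hz => LinearMap.mem_range.2 ((hgen z).1 hz)) (fun t ht z hz => ?_)
      B.continuous hb hf ht
    obtain ⟨x, rfl⟩ := LinearMap.mem_range.1 hz
    exact LinearMap.mem_range.2 ⟨T t x, (hext t ht x).symm⟩
  · rw [hK f ht.1, hAm1ext _ (ha f hf t ht)]

theorem stmt18 {X Xm1 U : Type*} [AddCommGroup X] [Module ℝ X] [UniformSpace X] [IsUniformAddGroup X]
    [ContinuousSMul ℝ X] [LocallyConvexSpace ℝ X] [T2Space X] [CompleteSpace X]
    [AddCommGroup Xm1] [Module ℝ Xm1] [UniformSpace Xm1] [IsUniformAddGroup Xm1]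
    [ContinuousSMul ℝ Xm1] [LocallyConvexSpace ℝ Xm1] [T2Space Xm1] [CompleteSpace Xm1]
    [AddCommGroup U] [Module ℝ U] [UniformSpace U] [IsUniformAddGroup U]
    [ContinuousSMul ℝ U] [LocallyConvexSpace ℝ U] [T2Space U]
    (r : ℝ) (hr : 0 < r)
    (T : ℝ → X →L[ℝ] X) (hT : IsSCQESemigroup T)
    (Ainv : X →L[ℝ] X)
    (hAinv1 : ∀ x : X, Ainv x ∈ genDomain T)
    (hAinv2 : ∀ x : X, generator T (Ainv x) = x)
    (hAinv3 : ∀ x ∈ genDomain T, Ainv (generator T x) = x)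
    (ι : X →L[ℝ] Xm1) (hιinj : Function.Injective ⇑ι) (hιind : IsInducing ⇑ι)
    (hιdense : DenseRange ⇑ι)
    (Am1 : X ≃L[ℝ] Xm1)
    (hAm1ext : ∀ x ∈ genDomain T, Am1 x = ι (generator T x))
    (Tm1 : ℝ → Xm1 →L[ℝ] Xm1) (hTm1 : IsSCQESemigroup Tm1)
    (hext : ∀ t : ℝ, 0 ≤ t → ∀ x : X, Tm1 t (ι x) = ι (T t x))
    (hconj : ∀ t : ℝ, 0 ≤ t → ∀ z : Xm1, Tm1 t z = Am1 (T t (Am1.symm z)))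
    (hgen : ∀ z : Xm1, z ∈ genDomain Tm1 ↔ z ∈ Set.range ⇑ι)
    (B : U →L[ℝ] Xm1) :
    ((∀ f : ℝ → U, ContinuousOn f (Set.Icc (0:ℝ) r) →
        ∀ t ∈ Set.Icc (0:ℝ) r,
          sgConv T (fun s => Am1.symm (B (f s))) t ∈ genDomain T) ↔
      (∀ f : ℝ → U, ContinuousOn f (Set.Icc (0:ℝ) r) →
        sgConv Tm1 (fun s => B (f s)) r ∈ Set.range ⇑ι)) ∧
    ((∀ f : ℝ → U, ContinuousOn f (Set.Icc (0:ℝ) r) →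
        ∀ t ∈ Set.Icc (0:ℝ) r,
          sgConv T (fun s => Am1.symm (B (f s))) t ∈ genDomain T) →
      ∀ f : ℝ → U, ContinuousOn f (Set.Icc (0:ℝ) r) →
        ∀ t ∈ Set.Icc (0:ℝ) r,
          sgConv Tm1 (fun s => B (f s)) t =
            ι (generator T (sgConv T (fun s => Am1.symm (B (f s))) t))) :=
  stmt18_general r hr T Ainv hAinv1 hAinv2 ι Am1 hAm1ext Tm1 hTm1 hext hconj hgen B
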